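/- Let x be a real number. Then for every n ∈ ℕ the convergents of ιx satisfy 0 < R_n(ιx) − x ≤ 1/A_n(ιx) and 0 ≤ x − L_n(ιx) < 1/A_n(ιx). -/

import Mathlib

/-- The remnants r_n(x): r_0(x) = x and r_{k+1}(x) = 1/((⌊r_k(x)⌋ + 1) − r_k(x)). -/
noncomputable def rem (x : ℝ) : ℕ → ℝ
  | 0 => x
  | k + 1 => 1 / (((⌊rem x k⌋ : ℝ) + 1) - rem x k)

/-- The subtraction continued fraction ιx: (ιx)_k = ⌊r_k(x)⌋ + 1, the unique
integer m with 0 < m − r_k(x) ≤ 1. -/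
noncomputable def iota (x : ℝ) (k : ℕ) : ℤ := ⌊rem x k⌋ + 1

/-- The 2×2 integer matrix V(m) = ((m, -1), (1, 0)). -/
def V (m : ℤ) : Matrix (Fin 2) (Fin 2) ℤ := !![m, -1; 1, 0]

/-- The matrix g_{n,s} = V(s 0) · V(s 1) ··· V(s n). -/
def gMat (s : ℕ → ℤ) (n : ℕ) : Matrix (Fin 2) (Fin 2) ℤ :=
  ((List.range (n + 1)).map fun i => V (s i)).prod

/-- The n-th right convergent R_n(s) = a_{n,s} / c_{n,s} as a real number. -/
noncomputable def R (s : ℕ → ℤ) (n : ℕ) : ℝ :=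
  (gMat s n 0 0 : ℝ) / (gMat s n 1 0 : ℝ)

/-- The n-th left convergent L_n(s) = (a_{n,s}+b_{n,s})/(c_{n,s}+d_{n,s}) as a real number. -/
noncomputable def L (s : ℕ → ℤ) (n : ℕ) : ℝ :=
  ((gMat s n 0 0 : ℝ) + (gMat s n 0 1 : ℝ)) / ((gMat s n 1 0 : ℝ) + (gMat s n 1 1 : ℝ))

/-- The n-th accuracy A_n(s) = (c_{n,s}+d_{n,s})·c_{n,s}, an integer. -/
def A (s : ℕ → ℤ) (n : ℕ) : ℤ :=
  (gMat s n 1 0 + gMat s n 1 1) * gMat s n 1 0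

/-!
Write `g_n = ((a, b), (c, d))` and `r = r_{n+1}(x)`. Since `r_k = ι_k − 1 / r_{k+1}`, the matrix
`V(ι_k)` sends the vector `(r_{k+1}, 1)` to a multiple of `(r_k, 1)`; hence `g_n (r, 1)` is a multiple
of `(x, 1)`, i.e. `x = (a r + b) / (c r + d)`. Together with `det g_n = 1` this gives the exact errors
`R_n − x = 1 / (c (c r + d))` and `x − L_n = (r − 1) / ((c + d)(c r + d))`, and the bounds follow from
`r ≥ 1`, `c > 0` and `c + d > 0`; the last two hold because `ι_k ≥ 2` for every `k ≥ 1`.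
-/

open Matrix Finset

section Remnants

variable (x : ℝ) (k : ℕ)

lemma iota_sub_rem_pos : 0 < (iota x k : ℝ) - rem x k := by
  have := Int.lt_floor_add_one (rem x k)
  push_cast [iota]
  linarith

lemma iota_sub_rem_le_one : (iota x k : ℝ) - rem x k ≤ 1 := by
  have := Int.floor_le (rem x k)
  push_cast [iota]
  linarith

lemma rem_succ : rem x (k + 1) = 1 / ((iota x k : ℝ) - rem x k) := by
  push_cast [rem, iota]
  rfl

lemma one_le_rem_succ : 1 ≤ rem x (k + 1) := by
  rw [rem_succ]
  exact one_le_one_div (iota_sub_rem_pos x k) (iota_sub_rem_le_one x k)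

lemma rem_succ_mul_iota_sub_rem : rem x (k + 1) * ((iota x k : ℝ) - rem x k) = 1 := by
  rw [rem_succ, one_div_mul_cancel (iota_sub_rem_pos x k).ne']

lemma two_le_iota_succ : 2 ≤ iota x (k + 1) := by
  have : 1 ≤ ⌊rem x (k + 1)⌋ := Int.le_floor.mpr (by exact_mod_cast one_le_rem_succ x k)
  unfold iota
  omega

end Remnants

section Convergents

variable (s : ℕ → ℤ)

lemma gMat_zero : gMat s 0 = V (s 0) := by
  simp [gMat]

lemma gMat_succ (n : ℕ) : gMat s (n + 1) = gMat s n * V (s (n + 1)) := by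
  rw [gMat, gMat, List.range_succ, List.map_append, List.prod_append]
  simp

lemma det_gMat (n : ℕ) : (gMat s n).det = 1 := by
  induction n with
  | zero => simp [gMat_zero, V, det_fin_two]
  | succ n ih => simp [gMat_succ, det_mul, ih, V, det_fin_two]

lemma gMat_succ_one_zero (n : ℕ) :
    gMat s (n + 1) 1 0 = gMat s n 1 0 * s (n + 1) + gMat s n 1 1 := by
  simp [gMat_succ, V, mul_apply, Fin.sum_univ_two]

lemma gMat_succ_one_one (n : ℕ) : gMat s (n + 1) 1 1 = -gMat s n 1 0 := by
  simp [gMat_succ, V, mul_apply, Fin.sum_univ_two]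

lemma gMat_one_zero_pos_and_add_pos (hs : ∀ k, 2 ≤ s (k + 1)) (n : ℕ) :
    0 < gMat s n 1 0 ∧ 0 < gMat s n 1 0 + gMat s n 1 1 := by
  induction n with
  | zero => simp [gMat_zero, V]
  | succ n ih =>
    rw [gMat_succ_one_zero, gMat_succ_one_one]
    have := hs n
    constructor <;> nlinarith

end Convergents

lemma V_mulVec_rem (x : ℝ) (k : ℕ) :
    (V (iota x k)).map (Int.castRingHom ℝ) *ᵥ ![rem x (k + 1), 1] =
      rem x (k + 1) • ![rem x k, 1] := by
  have h := rem_succ_mul_iota_sub_rem x k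
  rw [mulVec_fin_two, smul_vec2]
  refine vec2_eq ?_ (by simp [V])
  simp only [V, map_apply, of_apply, cons_val', cons_val_zero, cons_val_fin_one, cons_val_one,
    Int.coe_castRingHom, Int.cast_neg, Int.cast_one, mul_one, smul_eq_mul]
  linear_combination h

lemma gMat_mulVec_rem (x : ℝ) (n : ℕ) :
    (gMat (iota x) n).map (Int.castRingHom ℝ) *ᵥ ![rem x (n + 1), 1] =
      (∏ k ∈ range (n + 1), rem x (k + 1)) • ![x, 1] := by
  induction n with
  | zero => simpa [gMat_zero, rem] using V_mulVec_rem x 0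
  | succ n ih =>
    rw [gMat_succ, Matrix.map_mul, ← mulVec_mulVec, V_mulVec_rem, mulVec_smul, ih, smul_smul,
      prod_range_succ _ (n + 1), mul_comm]

lemma eq_mobius_gMat_rem (x : ℝ) (n : ℕ) :
    x * (gMat (iota x) n 1 0 * rem x (n + 1) + gMat (iota x) n 1 1) =
      gMat (iota x) n 0 0 * rem x (n + 1) + gMat (iota x) n 0 1 := by
  have h := gMat_mulVec_rem x n
  rw [mulVec_fin_two, smul_vec2] at h
  have h0 := congrFun h 0
  have h1 := congrFun h 1
  simp only [map_apply, eq_intCast, cons_val_zero, cons_val_one, mul_one, smul_eq_mul] at h0 h1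
  rw [h0, h1, mul_comm]

section Errors

variable {x r a b c d : ℝ}

lemma div_sub_eq_of_mobius (hc : 0 < c) (hden : 0 < c * r + d) (hdet : a * d - b * c = 1)
    (hx : x * (c * r + d) = a * r + b) : a / c - x = 1 / (c * (c * r + d)) := by
  field_simp
  linear_combination (-c) * hx + hdet

lemma sub_div_eq_of_mobius (hcd : 0 < c + d) (hden : 0 < c * r + d) (hdet : a * d - b * c = 1)
    (hx : x * (c * r + d) = a * r + b) :
    x - (a + b) / (c + d) = (r - 1) / ((c * r + d) * (c + d)) := by
  field_simp
  linear_combination (c + d) * hx + (r - 1) * hdet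

lemma right_error_bounds (hr : 1 ≤ r) (hc : 0 < c) (hcd : 0 < c + d)
    (hdet : a * d - b * c = 1) (hx : x * (c * r + d) = a * r + b) :
    0 < a / c - x ∧ a / c - x ≤ 1 / ((c + d) * c) := by
  have hden : c + d ≤ c * r + d := by nlinarith
  have hden_pos : 0 < c * r + d := by linarith
  rw [div_sub_eq_of_mobius hc hden_pos hdet hx, mul_comm (c + d)]
  exact ⟨by positivity, one_div_le_one_div_of_le (by positivity) (by gcongr)⟩

lemma left_error_bounds (hr : 1 ≤ r) (hc : 0 < c) (hcd : 0 < c + d)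
    (hdet : a * d - b * c = 1) (hx : x * (c * r + d) = a * r + b) :
    0 ≤ x - (a + b) / (c + d) ∧ x - (a + b) / (c + d) < 1 / ((c + d) * c) := by
  have hden : 0 < c * r + d := by nlinarith
  rw [sub_div_eq_of_mobius hcd hden hdet hx]
  refine ⟨div_nonneg (by linarith) (by positivity), ?_⟩
  rw [div_lt_div_iff₀ (by positivity) (by positivity)]
  nlinarith

end Errors

/-- For any real x and n ∈ ℕ, 0 < R_n(ιx) − x ≤ 1/A_n(ιx) and
0 ≤ x − L_n(ιx) < 1/A_n(ιx). -/
theorem stmt_12 (x : ℝ) (n : ℕ) :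
    (0 < R (iota x) n - x ∧ R (iota x) n - x ≤ 1 / (A (iota x) n : ℝ)) ∧
    (0 ≤ x - L (iota x) n ∧ x - L (iota x) n < 1 / (A (iota x) n : ℝ)) := by
  have hx := eq_mobius_gMat_rem x n
  have hr := one_le_rem_succ x n
  have hpos := gMat_one_zero_pos_and_add_pos (iota x) (two_le_iota_succ x) n
  have hdet := det_gMat (iota x) n
  rw [R, L, A]
  set g := gMat (iota x) n
  obtain ⟨hc, hcd⟩ : (0 : ℝ) < g 1 0 ∧ (0 : ℝ) < g 1 0 + g 1 1 := by exact_mod_cast hpos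
  replace hdet : (g 0 0 * g 1 1 - g 0 1 * g 1 0 : ℝ) = 1 := by
    exact_mod_cast (det_fin_two g).symm.trans hdet
  push_cast
  exact ⟨right_error_bounds hr hc hcd hdet hx, left_error_bounds hr hc hcd hdet hx⟩
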